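/- arXiv:0801.2553 — 2 statements merged into one kernel-verified Lean document; each statement's English description precedes it below -/
import Mathlib

section
/- On the torus T_φ = {r = φ(θ)} in ℝ/2πℤ × ℝ² (coordinates (x, r, θ)) with contact form dz - y dx = r cosθ dθ + sinθ dr - r cosθ dx, the characteristic foliation in coordinates (θ, x) is given by dx/dθ = 1 + ψ'(θ) tanθ, where ψ = log φ. The slope (rotation number) of this foliation is λ(φ) = (1/2π)∫₀^{2π} (1 + ψ'(θ) tanθ) dθ. For any real number μ and any ε > 0, there exists a 2π-periodic smooth function ψ, C⁰-close to log ε, with ψ'(±π/2) = 0 and (1/2π)∫₀^{2π}(1 + ψ'(θ) tanθ) dθ = μ. -/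
open Real intervalIntegral

open MeasureTheory in
lemma cosZero_null : MeasureTheory.volume {θ : ℝ | Real.cos θ = 0} = 0 := by
  have h : {θ : ℝ | Real.cos θ = 0} ⊆ Set.range (fun k : ℤ => ((2 * k + 1) * π / 2 : ℝ)) := by
    intro θ hθ
    rcases Real.cos_eq_zero_iff.mp hθ with ⟨k, hk⟩
    exact ⟨k, hk.symm⟩
  exact MeasureTheory.measure_mono_null h ((Set.countable_range _).measure_zero _)

lemma ae_cos_ne : ∀ᵐ θ : ℝ, Real.cos θ ≠ 0 := by
  rw [MeasureTheory.ae_iff]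
  simpa using cosZero_null

lemma ae_rec (n : ℕ) :
    ∀ᵐ θ : ℝ, Real.sin (2 * ((n : ℝ) + 1) * θ) * Real.tan θ
      = 2 * Real.sin ((2 * (n : ℝ) + 1) * θ) * Real.sin θ
          - Real.sin (2 * (n : ℝ) * θ) * Real.tan θ := by
  filter_upwards [ae_cos_ne] with θ hθ
  have key : Real.sin (2 * ((n : ℝ) + 1) * θ) + Real.sin (2 * (n : ℝ) * θ)
      = 2 * Real.sin ((2 * (n : ℝ) + 1) * θ) * Real.cos θ := by
    rw [show 2 * ((n : ℝ) + 1) * θ = (2 * (n : ℝ) + 1) * θ + θ by ring,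
      show 2 * (n : ℝ) * θ = (2 * (n : ℝ) + 1) * θ - θ by ring,
      Real.sin_add, Real.sin_sub]
    ring
  rw [Real.tan_eq_sin_div_cos]
  field_simp
  linear_combination (norm := ring_nf) Real.sin θ * key

lemma intCosInt (k : ℤ) (hk : (k : ℝ) ≠ 0) :
    ∫ θ in (0:ℝ)..(2 * π), Real.cos ((k : ℝ) * θ) = 0 := by
  have h : ∀ θ ∈ Set.uIcc (0:ℝ) (2 * π),
      HasDerivAt (fun x => Real.sin ((k : ℝ) * x) / k) (Real.cos ((k : ℝ) * θ)) θ := by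
    intro θ _
    have h1 : HasDerivAt (fun x : ℝ => (k : ℝ) * x) ((k : ℝ)) θ := by
      simpa using (hasDerivAt_id θ).const_mul (k : ℝ)
    have h2 := ((Real.hasDerivAt_sin ((k : ℝ) * θ)).comp θ h1).div_const (k : ℝ)
    simpa [mul_div_assoc, mul_div_cancel_right₀, hk] using h2
  rw [integral_eq_sub_of_hasDerivAt h
    ((Real.continuous_cos.comp (continuous_const.mul continuous_id)).intervalIntegrable _ _)]
  have h2 : (k : ℝ) * (2 * π) = ((2 * k : ℤ) : ℝ) * π := by push_cast; ring
  rw [h2, Real.sin_int_mul_pi]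
  simp

lemma intSinSin (m : ℕ) :
    ∫ θ in (0:ℝ)..(2 * π), Real.sin ((2 * (m : ℝ) + 1) * θ) * Real.sin θ
      = if m = 0 then π else 0 := by
  rcases Nat.eq_zero_or_pos m with hm | hm
  · subst hm
    simp only [Nat.cast_zero, mul_zero, zero_add, one_mul, if_true]
    have : ∀ θ : ℝ, Real.sin θ * Real.sin θ = Real.sin θ ^ 2 := fun θ => (sq _).symm
    rw [intervalIntegral.integral_congr (fun θ _ => this θ), integral_sin_sq]
    simp [Real.sin_two_pi, Real.cos_two_pi]
  · have hm0 : m ≠ 0 := hm.ne'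
    rw [if_neg hm0]
    have hptw : ∀ θ : ℝ, Real.sin ((2 * (m : ℝ) + 1) * θ) * Real.sin θ
        = (Real.cos (((2 * m : ℤ) : ℝ) * θ) - Real.cos (((2 * m + 2 : ℤ) : ℝ) * θ)) / 2 := by
      intro θ
      have := Real.cos_sub_cos ((2 * (m : ℝ)) * θ) ((2 * (m : ℝ) + 2) * θ)
      push_cast
      rw [show (2 * (m : ℝ)) * θ - (2 * (m : ℝ) + 2) * θ = -(2 * θ) by ring] at this
      rw [show ((2 * (m : ℝ)) * θ + (2 * (m : ℝ) + 2) * θ) / 2 = (2 * (m : ℝ) + 1) * θ by ring]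
        at this
      rw [show -(2*θ)/2 = -θ by ring, Real.sin_neg] at this
      linarith [this]
    rw [intervalIntegral.integral_congr (fun θ _ => hptw θ)]
    have c1 : Continuous fun θ : ℝ => Real.cos (((2 * m : ℤ) : ℝ) * θ) :=
      Real.continuous_cos.comp (continuous_const.mul continuous_id)
    have c2 : Continuous fun θ : ℝ => Real.cos (((2 * m + 2 : ℤ) : ℝ) * θ) :=
      Real.continuous_cos.comp (continuous_const.mul continuous_id)
    rw [intervalIntegral.integral_div, intervalIntegral.integral_sub
      (c1.intervalIntegrable _ _) (c2.intervalIntegrable _ _)]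
    rw [intCosInt (2 * m) (by exact_mod_cast mul_ne_zero two_ne_zero (Nat.cast_ne_zero.mpr hm0)),
      intCosInt (2 * m + 2) (by positivity)]
    norm_num

lemma tan_int (n : ℕ) :
    IntervalIntegrable (fun θ => Real.sin (2 * (n : ℝ) * θ) * Real.tan θ)
        MeasureTheory.volume 0 (2 * π) ∧
      (∫ θ in (0:ℝ)..(2 * π), Real.sin (2 * (n : ℝ) * θ) * Real.tan θ)
        = if n = 0 then 0 else (-1 : ℝ) ^ (n + 1) * (2 * π) := by
  induction n with
  | zero =>
      constructor
      · simpa using (intervalIntegrable_const (c := (0:ℝ)) (μ := MeasureTheory.volume)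
          (a := (0:ℝ)) (b := 2 * π)).congr (by simp)
      · simp
  | succ n ih =>
      have hg : IntervalIntegrable
          (fun θ => 2 * Real.sin ((2 * (n : ℝ) + 1) * θ) * Real.sin θ
            - Real.sin (2 * (n : ℝ) * θ) * Real.tan θ) MeasureTheory.volume 0 (2 * π) := by
        refine IntervalIntegrable.sub ?_ ih.1
        exact ((continuous_const.mul (Real.continuous_sin.comp
          (continuous_const.mul continuous_id))).mul Real.continuous_sin).intervalIntegrable _ _
      have hcast : ((n + 1 : ℕ) : ℝ) = (n : ℝ) + 1 := by push_cast; ring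
      have hae := ae_rec n
      constructor
      · refine hg.congr_ae ?_
        refine MeasureTheory.ae_restrict_of_ae ?_
        filter_upwards [hae] with θ hθ
        rw [hcast, hθ]
      · rw [hcast]
        rw [intervalIntegral.integral_congr_ae
          (by filter_upwards [hae] with θ hθ _ using hθ)]
        have hsplit : (∫ θ in (0:ℝ)..(2 * π),
            (2 * Real.sin ((2 * (n : ℝ) + 1) * θ) * Real.sin θ
              - Real.sin (2 * (n : ℝ) * θ) * Real.tan θ))
          = (∫ θ in (0:ℝ)..(2 * π), 2 * Real.sin ((2 * (n : ℝ) + 1) * θ) * Real.sin θ)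
            - ∫ θ in (0:ℝ)..(2 * π), Real.sin (2 * (n : ℝ) * θ) * Real.tan θ := by
          refine intervalIntegral.integral_sub ?_ ih.1
          exact ((continuous_const.mul (Real.continuous_sin.comp
            (continuous_const.mul continuous_id))).mul Real.continuous_sin).intervalIntegrable _ _
        rw [hsplit]
        have h2 : (∫ θ in (0:ℝ)..(2 * π), 2 * Real.sin ((2 * (n : ℝ) + 1) * θ) * Real.sin θ)
            = 2 * ∫ θ in (0:ℝ)..(2 * π), Real.sin ((2 * (n : ℝ) + 1) * θ) * Real.sin θ := by
          rw [← intervalIntegral.integral_const_mul]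
          exact intervalIntegral.integral_congr (fun θ _ => by ring)
        rw [h2, intSinSin, ih.2]
        rcases Nat.eq_zero_or_pos n with hn | hn
        · subst hn; norm_num
        · simp only [if_neg hn.ne', if_neg (Nat.succ_ne_zero n), pow_succ]
          ring

/-- For every real number `μ` and every `ε > 0`, there is a smooth `2π`-periodic
function `ψ`, arbitrarily `C⁰`-close to the constant `log ε`, with
`ψ'(π/2) = ψ'(3π/2) = 0`, such that the slope of the characteristic foliation
of the torus `T_φ` (`φ = exp ψ`), namely
`λ(φ) = (1/2π) ∫₀^{2π} (1 + ψ'(θ) tan θ) dθ`, equals `μ`. -/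
theorem slope_realization (μ ε δ : ℝ) (hε : 0 < ε) (hδ : 0 < δ) :
    ∃ ψ : ℝ → ℝ, ContDiff ℝ (⊤ : ℕ∞) ψ ∧
      (∀ θ : ℝ, ψ (θ + 2 * π) = ψ θ) ∧
      (∀ θ : ℝ, |ψ θ - Real.log ε| < δ) ∧
      deriv ψ (π / 2) = 0 ∧ deriv ψ (3 * π / 2) = 0 ∧
      (1 / (2 * π)) * (∫ θ in (0:ℝ)..(2 * π), (1 + deriv ψ θ * Real.tan θ)) = μ := by
  set c : ℝ := μ - 1 with hc
  set m : ℕ := Nat.ceil (|c| / δ) with hm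
  set n : ℕ := 2 * m + 1 with hn
  have hnpos : 0 < (n : ℝ) := by positivity
  have hn0 : (2 * (n : ℝ)) ≠ 0 := by positivity
  have hcn : |c| / (n : ℝ) < δ := by
    rw [div_lt_iff₀ hnpos]
    have h1 : |c| / δ < (n : ℝ) := by
      calc |c| / δ ≤ (m : ℝ) := Nat.le_ceil _
        _ < (n : ℝ) := by rw [hn]; push_cast; linarith [Nat.cast_nonneg (α := ℝ) m]
    calc |c| = (|c| / δ) * δ := by field_simp
      _ < (n : ℝ) * δ := by exact mul_lt_mul_of_pos_right h1 hδ
      _ = δ * n := by ring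
  set ψ : ℝ → ℝ := fun θ => Real.log ε + c * (1 - Real.cos (2 * (n : ℝ) * θ)) / (2 * n) with hψ
  have hD : ∀ θ : ℝ, HasDerivAt ψ (c * Real.sin (2 * (n : ℝ) * θ)) θ := by
    intro θ
    have h1 : HasDerivAt (fun x : ℝ => 2 * (n : ℝ) * x) (2 * (n : ℝ)) θ := by
      simpa using (hasDerivAt_id θ).const_mul (2 * (n : ℝ))
    have h2 : HasDerivAt (fun x : ℝ => Real.cos (2 * (n : ℝ) * x))
        (-Real.sin (2 * (n : ℝ) * θ) * (2 * (n : ℝ))) θ :=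
      (Real.hasDerivAt_cos _).comp θ h1
    have h3 := ((((hasDerivAt_const θ (1:ℝ)).sub h2).const_mul c).div_const
      (2 * (n : ℝ))).const_add (Real.log ε)
    exact h3.congr_deriv (by field_simp; ring)
  have hderiv : deriv ψ = fun θ => c * Real.sin (2 * (n : ℝ) * θ) :=
    funext fun θ => (hD θ).deriv
  refine ⟨ψ, ?_, ?_, ?_, ?_, ?_, ?_⟩
  · rw [hψ]
    exact contDiff_const.add ((contDiff_const.mul (contDiff_const.sub
      (Real.contDiff_cos.comp (contDiff_const.mul contDiff_id)))).div_const _)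
  · intro θ
    have : 2 * (n : ℝ) * (θ + 2 * π) = 2 * (n : ℝ) * θ + ((n : ℤ) : ℝ) * (2 * (2 * π)) := by
      push_cast; ring
    simp only [hψ, this]
    rw [show ((n : ℤ) : ℝ) * (2 * (2 * π)) = ((2 * n : ℤ) : ℝ) * (2 * π) by push_cast; ring,
      Real.cos_add_int_mul_two_pi]
  · intro θ
    have h0 : ψ θ - Real.log ε = c * (1 - Real.cos (2 * (n : ℝ) * θ)) / (2 * n) := by
      rw [hψ]; ring
    rw [h0, abs_div, abs_mul, abs_of_pos (by positivity : (0:ℝ) < 2 * n)]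
    have h1 : |1 - Real.cos (2 * (n : ℝ) * θ)| ≤ 2 := by
      rw [abs_le]
      constructor
      · nlinarith [Real.cos_le_one (2 * (n : ℝ) * θ)]
      · nlinarith [Real.neg_one_le_cos (2 * (n : ℝ) * θ)]
    have h2 : |c| * |1 - Real.cos (2 * (n : ℝ) * θ)| / (2 * n) ≤ |c| / n := by
      rw [div_le_div_iff₀ (by positivity) hnpos]
      nlinarith [mul_le_mul_of_nonneg_left h1 (abs_nonneg c), hnpos]
    linarith
  · rw [hderiv]
    have : 2 * (n : ℝ) * (π / 2) = (n : ℝ) * π := by ring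
    simp [this, Real.sin_nat_mul_pi]
  · rw [hderiv]
    have h3 : 2 * (n : ℝ) * (3 * π / 2) = ((3 * n : ℕ) : ℝ) * π := by push_cast; ring
    simp only [h3, Real.sin_nat_mul_pi, mul_zero]
  · rw [hderiv]
    obtain ⟨hint, hval⟩ := tan_int n
    have hsplit : (∫ θ in (0:ℝ)..(2 * π),
        (1 + c * Real.sin (2 * (n : ℝ) * θ) * Real.tan θ))
      = (∫ _ in (0:ℝ)..(2 * π), (1:ℝ))
        + c * ∫ θ in (0:ℝ)..(2 * π), Real.sin (2 * (n : ℝ) * θ) * Real.tan θ := by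
      rw [← intervalIntegral.integral_const_mul,
        ← intervalIntegral.integral_add intervalIntegrable_const
          (by simpa [mul_assoc] using hint.const_mul c)]
      exact intervalIntegral.integral_congr (fun θ _ => by ring)
    rw [hsplit, hval, if_neg (Nat.succ_ne_zero _)]
    have hpow : (-1 : ℝ) ^ (n + 1) = 1 := by
      rw [hn]
      exact Even.neg_one_pow ⟨m + 1, by ring⟩
    rw [hpow]
    simp only [intervalIntegral.integral_const, smul_eq_mul, sub_zero, mul_one, one_mul]
    field_simp
    ring
end

section
/- Any signed planar embedding of a finite tree (vertices labeled ±, adjacent vertices having opposite labels) can be transformed into a signed embedding of an almost linear tree by a finite sequence of moves, each of which detaches an end edge from one vertex and reattaches it to another vertex of the same sign. -/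
open Finset
open scoped Classical

variable {V : Type} [Fintype V] [DecidableEq V]

/-- Valence of a vertex of a graph (number of adjacent vertices). -/
noncomputable def valence (G : SimpleGraph V) (v : V) : ℕ :=
  (Finset.univ.filter fun u => G.Adj v u).card

/-- A tree is almost linear if at most one vertex has valence greater than two,
and at most one of the edges attached to this vertex is a non-end edge
(i.e. at most one neighbor of it has valence ≥ 2). -/
noncomputable def AlmostLinear (G : SimpleGraph V) : Prop :=
  ∃ w : V, (∀ v : V, v ≠ w → valence G v ≤ 2) ∧
    (Finset.univ.filter fun u => G.Adj w u ∧ 2 ≤ valence G u).card ≤ 1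

/-- A proper signing of a graph: adjacent vertices get opposite signs. -/
def ProperSigning (G : SimpleGraph V) (s : V → Bool) : Prop :=
  ∀ u v : V, G.Adj u v → s u ≠ s v

/-- A move detaches the end edge `{x, v}` (`x` an end vertex) from `v` and
reattaches it at another vertex `w` of the same sign as `v`. -/
noncomputable def Move (s : V → Bool) (G G' : SimpleGraph V) : Prop :=
  ∃ x v w : V, valence G x = 1 ∧ G.Adj x v ∧ s w = s v ∧ w ≠ x ∧ w ≠ v ∧
    G' = (G \ SimpleGraph.fromEdgeSet {s(x, v)}) ⊔ SimpleGraph.fromEdgeSet {s(x, w)}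

/-!
Fix an edge `ab`. While some vertex other than `a`, `b` is not a leaf, take a vertex beyond the
farthest such non-leaf: it is a leaf, and its neighbour has the sign of `a` or of `b`, so it can be
moved onto `a` or `b`. This raises `valence a + valence b` and ends in a double star around `ab`.
From then on the tree keeps the shape of a double broom: leaves at `a`, leaves and one path at
`b`. Unless `a` or `b` already serves as the hub of an almost linear tree, a leaf of `a` or a leaf
of `b`, whichever has the right sign, is moved to the far end of the path, which lowers
`valence a + valence b`.
-/

lemma Relation.exists_reflTransGen_of_descent {α : Type*} {r : α → α → Prop}
    (P Q : α → Prop) (μ : α → ℕ) (step : ∀ a, P a → ¬Q a → ∃ b, r a b ∧ P b ∧ μ b < μ a) :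
    ∀ a, P a → ∃ b, Relation.ReflTransGen r a b ∧ P b ∧ Q b := by
  intro a
  induction h : μ a using Nat.strong_induction_on generalizing a with
  | _ n ih =>
    intro ha
    by_cases hQ : Q a
    · exact ⟨a, .refl, ha, hQ⟩
    obtain ⟨b, hab, hb, hμ⟩ := step a ha hQ
    obtain ⟨c, hbc, hc⟩ := ih (μ b) (h ▸ hμ) b rfl hb
    exact ⟨c, .head hab hbc, hc⟩

lemma Bool.eq_or_eq_of_ne {p q : Bool} (h : p ≠ q) (r : Bool) : r = p ∨ r = q := by
  cases p <;> cases q <;> cases r <;> simp_all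

namespace SimpleGraph

variable {α : Type*} {G : SimpleGraph α}

lemma IsTree.eq_of_adj_of_dist_add_one_eq (hG : G.IsTree) (r : α) {v u₁ u₂ : α}
    (h₁ : G.Adj v u₁) (h₂ : G.Adj v u₂) (hd₁ : G.dist r u₁ + 1 = G.dist r v)
    (hd₂ : G.dist r u₂ + 1 = G.dist r v) : u₁ = u₂ := by
  obtain ⟨p, hp, -⟩ := hG.connected.exists_path_of_dist r v
  suffices key : ∀ u, G.Adj v u → G.dist r u + 1 = G.dist r v → u = p.penultimate from
    (key u₁ h₁ hd₁).trans (key u₂ h₂ hd₂).symm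
  intro u hu hd
  obtain ⟨q, hq, hlen⟩ := hG.connected.exists_path_of_dist r u
  have hvq : v ∉ q.support := fun hv => by
    have := (dist_le (q.takeUntil v hv)).trans (q.length_takeUntil_le_length hv)
    omega
  refine hG.isAcyclic.eq_penultimate_of_adj_end hp hu (by_contra fun hup => hvq ?_)
  exact hG.isAcyclic.mem_support_of_ne_mem_support_of_adj_of_isPath hq hp hu.symm hup

lemma IsTree.dist_eq_two_of_adj_of_adj (hG : G.IsTree) {r b x : α} (hrb : G.Adj r b)
    (hbx : G.Adj b x) (hxr : x ≠ r) : G.dist r x = 2 := by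
  have h0 : G.dist r x ≠ 0 := fun h => hxr ((hG.connected.dist_eq_zero_iff.1 h).symm)
  have h1 : G.dist r b = 1 := dist_eq_one_iff_adj.2 hrb
  rcases hG.dist_eq_dist_add_one_of_adj r hbx with h | h <;> omega

variable {x v w : α}

def moveLeaf (G : SimpleGraph α) (x v w : α) : SimpleGraph α :=
  G.deleteEdges {s(x, v)} ⊔ edge x w

lemma moveLeaf_adj_of_ne {p q : α} (hp : p ≠ x) (hq : q ≠ x) :
    (G.moveLeaf x v w).Adj p q ↔ G.Adj p q := by
  simp [moveLeaf, edge_adj, hp, hq]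

lemma moveLeaf_adj_left (hx : ∀ z, G.Adj x z → z = v) (hwx : w ≠ x) {z : α} :
    (G.moveLeaf x v w).Adj x z ↔ z = w := by
  simp only [moveLeaf, sup_adj, deleteEdges_adj, edge_adj, Set.mem_singleton_iff]
  constructor
  · rintro (⟨h, hne⟩ | ⟨⟨-, rfl⟩ | ⟨rfl, -⟩, -⟩)
    exacts [absurd (by rw [hx z h]) hne, rfl, absurd rfl hwx]
  · rintro rfl
    exact Or.inr ⟨Or.inl ⟨trivial, rfl⟩, hwx.symm⟩

lemma IsTree.moveLeaf (hG : G.IsTree) (hxv : G.Adj x v) (hx : ∀ z, G.Adj x z → z = v)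
    (hwx : w ≠ x) : (G.moveLeaf x v w).IsTree := by
  -- deleting the end edge `xv` isolates `x`; the rest of the tree stays connected
  have hreach : ∀ u, u ≠ x → (G.deleteEdges {s(x, v)}).Reachable u v := fun u hu => by
    obtain ⟨p, hp⟩ := hG.connected.exists_isPath u v
    have hxp : x ∉ p.support := hp.isTrail.not_mem_support_of_subsingleton_neighborSet
      (Ne.symm hu) hxv.ne fun z hz z' hz' => (hx z hz).trans (hx z' hz').symm
    exact ⟨p.toDeleteEdge _ fun h => hxp (p.fst_mem_support_of_mem_edges h)⟩
  have hxw : ¬(G.deleteEdges {s(x, v)}).Reachable x w := fun ⟨p⟩ => by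
    have h := p.adj_snd (Walk.not_nil_of_ne hwx.symm)
    simp only [deleteEdges_adj, Set.mem_singleton_iff] at h
    exact h.2 (by rw [hx _ h.1])
  refine ⟨(connected_iff_exists_forall_reachable _).2 ⟨v, fun u => ?_⟩,
    (hG.isAcyclic.anti (deleteEdges_le _)).sup_edge_of_not_reachable hxw⟩
  have hle : G.deleteEdges {s(x, v)} ≤ G.moveLeaf x v w := le_sup_left
  by_cases hu : u = x
  · subst hu
    have hadj : (G.moveLeaf u v w).Adj u w := (moveLeaf_adj_left hx hwx).2 rfl
    exact ((hreach w hwx).mono hle).symm.trans hadj.symm.reachable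
  · exact ((hreach u hu).mono hle).symm

end SimpleGraph

section

omit [DecidableEq V]

open SimpleGraph

variable {G : SimpleGraph V} {s : V → Bool} {a b u v w x : V}

lemma valence_pos (h : G.Adj v u) : 0 < valence G v :=
  Finset.card_pos.2 ⟨u, by simp [h]⟩

lemma valence_le_card (v : V) : valence G v ≤ Fintype.card V :=
  Finset.card_filter_le _ _

lemma eq_of_adj_of_valence_eq_one (hx : valence G x = 1) (hv : G.Adj x v) (hu : G.Adj x u) :
    u = v :=
  Finset.card_le_one.1 hx.le u (by simp [hu]) v (by simp [hv])

lemma exists_adj_ne_of_two_le_valence (hv : 2 ≤ valence G v) (b : V) :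
    ∃ u, G.Adj v u ∧ u ≠ b := by
  obtain ⟨u₁, h₁, u₂, h₂, hne⟩ := Finset.one_lt_card.1 hv
  simp only [Finset.mem_filter, Finset.mem_univ, true_and] at h₁ h₂
  by_cases hb : u₁ = b
  · exact ⟨u₂, h₂, fun h => hne (hb.trans h.symm)⟩
  · exact ⟨u₁, h₁, hb⟩

lemma SimpleGraph.IsTree.exists_adj_dist_eq_add_one (hG : G.IsTree) (r : V)
    (hv : 2 ≤ valence G v) : ∃ c, G.Adj v c ∧ G.dist r c = G.dist r v + 1 := by
  obtain ⟨u₁, h₁, u₂, h₂, hne⟩ := Finset.one_lt_card.1 hv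
  simp only [Finset.mem_filter, Finset.mem_univ, true_and] at h₁ h₂
  by_contra! hc
  have parent : ∀ u, G.Adj v u → G.dist r u + 1 = G.dist r v := fun u hu => by
    have := hc u hu
    rcases hG.dist_eq_dist_add_one_of_adj r hu with h | h <;> omega
  exact hne (hG.eq_of_adj_of_dist_add_one_eq r h₁ h₂ (parent u₁ h₁) (parent u₂ h₂))

lemma SimpleGraph.IsTree.valence_le_one_of_forall_dist_le (hG : G.IsTree) {r e : V}
    (he : ∀ z, G.dist r z ≤ G.dist r e) : valence G e ≤ 1 := by
  by_contra! h
  obtain ⟨c, -, hc⟩ := hG.exists_adj_dist_eq_add_one r h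
  have := he c
  omega

lemma moveLeaf_adj_of_ne_left (hx : valence G x = 1) (hxv : G.Adj x v) (hwx : w ≠ x)
    (hu : u ≠ x) {z : V} :
    (G.moveLeaf x v w).Adj u z ↔ (G.Adj u z ∧ z ≠ x) ∨ (u = w ∧ z = x) := by
  by_cases hz : z = x
  · subst hz
    rw [adj_comm, moveLeaf_adj_left (fun _ => eq_of_adj_of_valence_eq_one hx hxv) hwx]
    simp
  · simp [moveLeaf_adj_of_ne hu hz, hz]

lemma valence_moveLeaf_of_ne (hx : valence G x = 1) (hxv : G.Adj x v) (hwx : w ≠ x)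
    (huv : u ≠ v) (huw : u ≠ w) : valence (G.moveLeaf x v w) u = valence G u := by
  by_cases hux : u = x
  · subst hux
    rw [hx, valence, Finset.card_eq_one]
    exact ⟨w, by ext z; simp [moveLeaf_adj_left (fun _ => eq_of_adj_of_valence_eq_one hx hxv) hwx]⟩
  · unfold valence
    congr 1
    ext z
    simp only [Finset.mem_filter, Finset.mem_univ, true_and,
      moveLeaf_adj_of_ne_left hx hxv hwx hux, huw, false_and, or_false, and_iff_left_iff_imp]
    rintro h rfl
    exact huv (eq_of_adj_of_valence_eq_one hx hxv h.symm)

lemma valence_moveLeaf_source (hx : valence G x = 1) (hxv : G.Adj x v) (hwx : w ≠ x)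
    (hwv : w ≠ v) : valence (G.moveLeaf x v w) v + 1 = valence G v := by
  have hnbrs : (univ.filter fun z => (G.moveLeaf x v w).Adj v z) =
      (univ.filter fun z => G.Adj v z).erase x := by
    ext z
    simp [moveLeaf_adj_of_ne_left hx hxv hwx hxv.ne', hwv.symm, and_comm]
  rw [valence, hnbrs, Finset.card_erase_add_one (by simpa using hxv.symm), valence]

lemma valence_moveLeaf_target (hx : valence G x = 1) (hxv : G.Adj x v) (hwx : w ≠ x)
    (hwv : w ≠ v) : valence (G.moveLeaf x v w) w = valence G w + 1 := by
  have hnbrs : (univ.filter fun z => (G.moveLeaf x v w).Adj w z) =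
      insert x (univ.filter fun z => G.Adj w z) := by
    ext z
    by_cases hz : z = x <;> simp [moveLeaf_adj_of_ne_left hx hxv hwx hwx, hz]
  rw [valence, hnbrs, Finset.card_insert_of_notMem, valence]
  simpa using fun h => hwv (eq_of_adj_of_valence_eq_one hx hxv h.symm)

lemma move_moveLeaf (hx : valence G x = 1) (hxv : G.Adj x v) (hsw : s w = s v) (hwx : w ≠ x)
    (hwv : w ≠ v) : Move s G (G.moveLeaf x v w) :=
  ⟨x, v, w, hx, hxv, hsw, hwx, hwv, rfl⟩

omit [Fintype V] in
lemma ProperSigning.moveLeaf (hs : ProperSigning G s) (hxv : G.Adj x v) (hsw : s w = s v) :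
    ProperSigning (G.moveLeaf x v w) s := by
  intro p q h
  rw [SimpleGraph.moveLeaf, sup_adj, deleteEdges_adj, edge_adj] at h
  rcases h with ⟨h, -⟩ | ⟨⟨rfl, rfl⟩ | ⟨rfl, rfl⟩, -⟩
  · exact hs p q h
  · rw [hsw]; exact hs p v hxv
  · rw [hsw]; exact (hs q v hxv).symm

lemma Move.isTree {G G' : SimpleGraph V} (h : Move s G G') (hG : G.IsTree) : G'.IsTree := by
  obtain ⟨x, v, w, hx, hxv, -, hwx, -, rfl⟩ := h
  exact hG.moveLeaf hxv (fun _ => eq_of_adj_of_valence_eq_one hx hxv) hwx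

lemma Move.properSigning {G G' : SimpleGraph V} (h : Move s G G') (hs : ProperSigning G s) :
    ProperSigning G' s := by
  obtain ⟨x, v, w, -, hxv, hsw, -, -, rfl⟩ := h
  exact hs.moveLeaf hxv hsw

lemma valence_add_valence_lt_moveLeaf (hx : valence G x = 1) (hxv : G.Adj x v)
    (hwx : w ≠ x) (hab : a ≠ b) (hw : w = a ∨ w = b) (hva : v ≠ a) (hvb : v ≠ b) :
    valence G a + valence G b <
      valence (G.moveLeaf x v w) a + valence (G.moveLeaf x v w) b := by
  rcases hw with rfl | rfl
  · have := valence_moveLeaf_target hx hxv hwx hva.symm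
    have := valence_moveLeaf_of_ne hx hxv hwx hvb.symm hab.symm
    omega
  · have := valence_moveLeaf_target hx hxv hwx hvb.symm
    have := valence_moveLeaf_of_ne hx hxv hwx hva.symm hab
    omega

lemma valence_moveLeaf_add_valence_lt (hx : valence G x = 1) (hxv : G.Adj x v)
    (hwx : w ≠ x) (hab : a ≠ b) (hv : v = a ∨ v = b) (hwa : w ≠ a) (hwb : w ≠ b) :
    valence (G.moveLeaf x v w) a + valence (G.moveLeaf x v w) b <
      valence G a + valence G b := by
  rcases hv with rfl | rfl
  · have := valence_moveLeaf_source hx hxv hwx hwa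
    have := valence_moveLeaf_of_ne hx hxv hwx hab.symm hwb.symm
    omega
  · have := valence_moveLeaf_source hx hxv hwx hwb
    have := valence_moveLeaf_of_ne hx hxv hwx hab hwa.symm
    omega

lemma exists_move_valence_add_valence_lt (hG : G.IsTree) (hs : ProperSigning G s)
    (hab : G.Adj a b) (h : ∃ v, v ≠ a ∧ v ≠ b ∧ 2 ≤ valence G v) :
    ∃ G', Move s G G' ∧ G'.Adj a b ∧ valence G a + valence G b < valence G' a + valence G' b := by
  obtain ⟨v₀, hv₀⟩ := h
  obtain ⟨u, hu, hmax⟩ := Finset.exists_max_image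
    (univ.filter fun v => v ≠ a ∧ v ≠ b ∧ 2 ≤ valence G v) (G.dist a) ⟨v₀, by simpa using hv₀⟩
  simp only [Finset.mem_filter, Finset.mem_univ, true_and] at hu hmax
  obtain ⟨hua, hub, hu2⟩ := hu
  -- a vertex beyond the farthest non-leaf `u` is a leaf hanging off neither `a` nor `b`
  obtain ⟨c, huc, hdc⟩ := hG.exists_adj_dist_eq_add_one a hu2
  have hdu : 0 < G.dist a u := hG.connected.pos_dist_of_ne (Ne.symm hua)
  have hca : c ≠ a := by rintro rfl; simp at hdc
  have hcb : c ≠ b := by rintro rfl; rw [dist_eq_one_iff_adj.2 hab] at hdc; omega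
  have hc : valence G c = 1 := by
    refine le_antisymm (not_lt.1 fun h2 => ?_) (valence_pos huc.symm)
    have := hmax c ⟨hca, hcb, h2⟩
    omega
  obtain ⟨w, hw, hsw⟩ : ∃ w, (w = a ∨ w = b) ∧ s w = s u := by
    rcases Bool.eq_or_eq_of_ne (hs a b hab) (s u) with h | h
    exacts [⟨a, .inl rfl, h.symm⟩, ⟨b, .inr rfl, h.symm⟩]
  have hwc : w ≠ c := by rcases hw with rfl | rfl <;> exact Ne.symm ‹_›
  have hwu : w ≠ u := by rcases hw with rfl | rfl <;> exact Ne.symm ‹_›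
  exact ⟨G.moveLeaf c u w, move_moveLeaf hc huc.symm hsw hwc hwu,
    (moveLeaf_adj_of_ne hca.symm hcb.symm).2 hab,
    valence_add_valence_lt_moveLeaf hc huc.symm hwc hab.ne hw hua hub⟩

lemma exists_reflTransGen_move_forall_valence_le_one (hG : G.IsTree) (hs : ProperSigning G s)
    (hab : G.Adj a b) :
    ∃ G', Relation.ReflTransGen (Move s) G G' ∧ (G'.IsTree ∧ ProperSigning G' s ∧ G'.Adj a b) ∧
      ∀ v, v ≠ a → v ≠ b → valence G' v ≤ 1 := by
  refine Relation.exists_reflTransGen_of_descent _ _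
    (fun G => 2 * Fintype.card V - (valence G a + valence G b)) ?_ G ⟨hG, hs, hab⟩
  rintro G ⟨hG, hs, hab⟩ h
  push Not at h
  obtain ⟨G', hmove, hab', hlt⟩ := exists_move_valence_add_valence_lt hG hs hab h
  refine ⟨G', hmove, ⟨hmove.isTree hG, hmove.properSigning hs, hab'⟩, ?_⟩
  have := valence_le_card (G := G') a
  have := valence_le_card (G := G') b
  omega

/-- `a` carries only leaves besides `b`, and `b` carries leaves besides `a` and at most one
path. -/
structure IsDoubleBroom (a b : V) (G : SimpleGraph V) : Prop where
  adj : G.Adj a b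
  valence_le_two : ∀ v, v ≠ a → v ≠ b → valence G v ≤ 2
  valence_le_one_of_adj_left : ∀ u, G.Adj a u → u ≠ b → valence G u ≤ 1
  subsingleton_nonleaf_adj_right : {u | G.Adj b u ∧ u ≠ a ∧ 2 ≤ valence G u}.Subsingleton

namespace IsDoubleBroom

lemma of_forall_valence_le_one (hab : G.Adj a b) (h : ∀ v, v ≠ a → v ≠ b → valence G v ≤ 1) :
    IsDoubleBroom a b G where
  adj := hab
  valence_le_two v hva hvb := (h v hva hvb).trans one_le_two
  valence_le_one_of_adj_left u hu hub := h u hu.ne' hub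
  subsingleton_nonleaf_adj_right u hu := by
    have := h u hu.2.1 hu.1.ne'
    have := hu.2.2
    omega

lemma almostLinear (hD : IsDoubleBroom a b G) (h : valence G b ≤ 2 ∨ valence G a ≤ 1) :
    AlmostLinear G := by
  rcases h with hb | ha
  · refine ⟨a, fun v hva => ?_, Finset.card_le_one.2 fun u hu u' hu' => ?_⟩
    · by_cases hvb : v = b
      exacts [hvb ▸ hb, hD.valence_le_two v hva hvb]
    · simp only [Finset.mem_filter, Finset.mem_univ, true_and] at hu hu'
      have hub : ∀ u, G.Adj a u → 2 ≤ valence G u → u = b := fun u hau h2 => by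
        by_contra hub
        have := hD.valence_le_one_of_adj_left u hau hub
        omega
      exact (hub u hu.1 hu.2).trans (hub u' hu'.1 hu'.2).symm
  · refine ⟨b, fun v hvb => ?_, Finset.card_le_one.2 fun u hu u' hu' => ?_⟩
    · by_cases hva : v = a
      exacts [hva ▸ ha.trans one_le_two, hD.valence_le_two v hva hvb]
    · simp only [Finset.mem_filter, Finset.mem_univ, true_and] at hu hu'
      have hne : ∀ u, 2 ≤ valence G u → u ≠ a := by
        rintro u h2 rfl
        omega
      exact hD.subsingleton_nonleaf_adj_right ⟨hu.1, hne u hu.2, hu.2⟩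
        ⟨hu'.1, hne u' hu'.2, hu'.2⟩

lemma exists_leaf_adj_right (hD : IsDoubleBroom a b G) (hb : 3 ≤ valence G b) :
    ∃ x, G.Adj b x ∧ x ≠ a ∧ valence G x = 1 := by
  by_contra! h
  have hnonleaf : ∀ x, G.Adj b x → x ≠ a → 2 ≤ valence G x := fun x hx hxa => by
    have := h x hx hxa
    have := valence_pos hx.symm
    omega
  obtain ⟨u₁, h₁, u₂, h₂, u₃, h₃, h₁₂, h₁₃, h₂₃⟩ := Finset.two_lt_card.1 hb
  simp only [Finset.mem_filter, Finset.mem_univ, true_and] at h₁ h₂ h₃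
  have key : ∀ u u', G.Adj b u → G.Adj b u' → u ≠ a → u' ≠ a → u = u' :=
    fun u u' hu hu' hua hua' => hD.subsingleton_nonleaf_adj_right
      ⟨hu, hua, hnonleaf u hu hua⟩ ⟨hu', hua', hnonleaf u' hu' hua'⟩
  -- two of three distinct neighbours of `b` differ from `a`
  by_cases ha₁ : u₁ = a
  · exact h₂₃ (key u₂ u₃ h₂ h₃ (fun h => h₁₂ (ha₁.trans h.symm))
      fun h => h₁₃ (ha₁.trans h.symm))
  · by_cases ha₂ : u₂ = a
    · exact h₁₃ (key u₁ u₃ h₁ h₃ ha₁ fun h => h₂₃ (ha₂.trans h.symm))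
    · exact h₁₂ (key u₁ u₂ h₁ h₂ ha₁ ha₂)

lemma moveLeaf (hD : IsDoubleBroom a b G) {ℓ p e : V} (hℓ : valence G ℓ = 1) (hℓp : G.Adj ℓ p)
    (hp : p = a ∨ p = b) (hℓa : ℓ ≠ a) (hℓb : ℓ ≠ b) (hea : e ≠ a) (heb : e ≠ b) (heℓ : e ≠ ℓ)
    (he : valence G e ≤ 1) (hae : ¬G.Adj a e)
    (hbe : G.Adj b e → ∀ u, G.Adj b u → u ≠ a → valence G u ≤ 1) :
    IsDoubleBroom a b (G.moveLeaf ℓ p e) := by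
  have hep : e ≠ p := by rcases hp with rfl | rfl <;> assumption
  have hval : ∀ u, u ≠ a → u ≠ b → u ≠ e → valence (G.moveLeaf ℓ p e) u = valence G u :=
    fun u hua hub hue => valence_moveLeaf_of_ne hℓ hℓp heℓ
      (by rcases hp with rfl | rfl <;> assumption) hue
  have hvale : valence (G.moveLeaf ℓ p e) e = valence G e + 1 :=
    valence_moveLeaf_target hℓ hℓp heℓ hep
  have hadj : ∀ q z, q ≠ ℓ → q ≠ e → (G.moveLeaf ℓ p e).Adj q z → G.Adj q z ∧ z ≠ ℓ := by
    intro q z hqℓ hqe h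
    rw [moveLeaf_adj_of_ne_left hℓ hℓp heℓ hqℓ] at h
    rcases h with h | ⟨rfl, -⟩
    exacts [h, absurd rfl hqe]
  refine ⟨(moveLeaf_adj_of_ne hℓa.symm hℓb.symm).2 hD.adj, fun v hva hvb => ?_,
    fun u hu hub => ?_, fun u hu u' hu' => ?_⟩
  · by_cases hve : v = e
    · rw [hve, hvale]
      omega
    · exact hval v hva hvb hve ▸ hD.valence_le_two v hva hvb
  · obtain ⟨hau, -⟩ := hadj a u hℓa.symm hea.symm hu
    have hue : u ≠ e := fun h => hae (h ▸ hau)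
    exact hval u hau.ne' hub hue ▸ hD.valence_le_one_of_adj_left u hau hub
  · have hold : ∀ u, u ∈ {u | (G.moveLeaf ℓ p e).Adj b u ∧ u ≠ a ∧
        2 ≤ valence (G.moveLeaf ℓ p e) u} → u ≠ e →
        u ∈ {u | G.Adj b u ∧ u ≠ a ∧ 2 ≤ valence G u} := by
      rintro u ⟨hbu, hua, h2⟩ hue
      obtain ⟨hbu, -⟩ := hadj b u hℓb.symm heb.symm hbu
      exact ⟨hbu, hua, hval u hua hbu.ne' hue ▸ h2⟩
    by_cases hue : u = e <;> by_cases hue' : u' = e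
    · exact hue.trans hue'.symm
    · rw [hue] at hu
      have := hbe (hadj b e hℓb.symm heb.symm hu.1).1 u' (hold u' hu' hue').1 hu'.2.1
      have := (hold u' hu' hue').2.2
      omega
    · rw [hue'] at hu'
      have := hbe (hadj b e hℓb.symm heb.symm hu'.1).1 u (hold u hu hue).1 hu.2.1
      have := (hold u hu hue).2.2
      omega
    · exact hD.subsingleton_nonleaf_adj_right (hold u hu hue) (hold u' hu' hue')

lemma exists_move (hG : G.IsTree) (hs : ProperSigning G s) (hD : IsDoubleBroom a b G)
    (ha : 2 ≤ valence G a) (hb : 3 ≤ valence G b) :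
    ∃ G', Move s G G' ∧ IsDoubleBroom a b G' ∧
      valence G' a + valence G' b < valence G a + valence G b := by
  obtain ⟨y, hay, hyb⟩ := exists_adj_ne_of_two_le_valence ha b
  have hy : valence G y = 1 :=
    le_antisymm (hD.valence_le_one_of_adj_left y hay hyb) (valence_pos hay.symm)
  obtain ⟨x, hbx, hxa, hx⟩ := hD.exists_leaf_adj_right hb
  -- the leaf `y` of `a` or the leaf `x` of `b` goes to the far end `e` of the path at `b`
  obtain ⟨e, -, he⟩ := Finset.exists_max_image univ (G.dist a) ⟨a, mem_univ a⟩
  replace he : ∀ z, G.dist a z ≤ G.dist a e := fun z => he z (mem_univ z)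
  have hde : 2 ≤ G.dist a e := hG.dist_eq_two_of_adj_of_adj hD.adj hbx hxa ▸ he x
  have hea : e ≠ a := by
    rintro rfl
    simp at hde
  have hae : ¬G.Adj a e := fun h => by
    rw [dist_eq_one_iff_adj.2 h] at hde
    omega
  have heb : e ≠ b := by
    rintro rfl
    exact hae hD.adj
  have he₁ : valence G e ≤ 1 := hG.valence_le_one_of_forall_dist_le he
  have hab : a ≠ b := hD.adj.ne
  rcases Bool.eq_or_eq_of_ne (hs a b hD.adj) (s e) with hsa | hsb
  · have hey : e ≠ y := by
      rintro rfl
      exact hae hay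
    refine ⟨G.moveLeaf y a e, move_moveLeaf hy hay.symm hsa hey hea,
      hD.moveLeaf hy hay.symm (.inl rfl) hay.ne' hyb hea heb hey he₁ hae ?_,
      valence_moveLeaf_add_valence_lt hy hay.symm hey hab (.inl rfl) hea heb⟩
    -- if `e` is adjacent to `b`, every vertex is within distance two of `a`
    intro hbe u hbu hua
    refine hG.valence_le_one_of_forall_dist_le (r := a) fun z => ?_
    rw [hG.dist_eq_two_of_adj_of_adj hD.adj hbu hua]
    exact (he z).trans (hG.dist_eq_two_of_adj_of_adj hD.adj hbe hea).le
  · have hbe : ¬G.Adj b e := fun h => hs b e h hsb.symm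
    have hex : e ≠ x := by
      rintro rfl
      exact hbe hbx
    exact ⟨G.moveLeaf x b e, move_moveLeaf hx hbx.symm hsb hex heb,
      hD.moveLeaf hx hbx.symm (.inr rfl) hxa hbx.ne' hea heb hex he₁ hae (absurd · hbe),
      valence_moveLeaf_add_valence_lt hx hbx.symm hex hab (.inr rfl) hea heb⟩

lemma exists_reflTransGen_move_almostLinear (hG : G.IsTree) (hs : ProperSigning G s)
    (hD : IsDoubleBroom a b G) :
    ∃ G', Relation.ReflTransGen (Move s) G G' ∧
      (G'.IsTree ∧ ProperSigning G' s ∧ IsDoubleBroom a b G') ∧ AlmostLinear G' := by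
  refine Relation.exists_reflTransGen_of_descent _ _
    (fun G => valence G a + valence G b) ?_ G ⟨hG, hs, hD⟩
  rintro G ⟨hG, hs, hD⟩ h
  have ha : 2 ≤ valence G a := by
    by_contra! ha
    exact h (hD.almostLinear (.inr (Nat.lt_succ_iff.1 ha)))
  have hb : 3 ≤ valence G b := by
    by_contra! hb
    exact h (hD.almostLinear (.inl (Nat.lt_succ_iff.1 hb)))
  obtain ⟨G', hmove, hD', hlt⟩ := hD.exists_move hG hs ha hb
  exact ⟨G', hmove, ⟨hmove.isTree hG, hmove.properSigning hs, hD'⟩, hlt⟩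

end IsDoubleBroom

end

/-- Any signed finite tree can be transformed into a signed almost linear tree
by a finite sequence of moves, each detaching an end edge and reattaching it at
another vertex of the same sign. -/
theorem signed_tree_to_almost_linear (G : SimpleGraph V) (hG : G.IsTree)
    (s : V → Bool) (hs : ProperSigning G s) :
    ∃ G' : SimpleGraph V, Relation.ReflTransGen (Move s) G G' ∧
      G'.IsTree ∧ ProperSigning G' s ∧ AlmostLinear G' := by
  by_cases hE : ∃ a b, G.Adj a b
  · obtain ⟨a, b, hab⟩ := hE
    obtain ⟨G₁, h₁, ⟨hG₁, hs₁, hab₁⟩, hstar⟩ :=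
      exists_reflTransGen_move_forall_valence_le_one hG hs hab
    obtain ⟨G₂, h₂, ⟨hG₂, hs₂, -⟩, hG₂lin⟩ :=
      (IsDoubleBroom.of_forall_valence_le_one hab₁ hstar).exists_reflTransGen_move_almostLinear
        hG₁ hs₁
    exact ⟨G₂, h₁.trans h₂, hG₂, hs₂, hG₂lin⟩
  · push Not at hE
    obtain ⟨w⟩ := hG.connected.nonempty
    exact ⟨G, .refl, hG, hs, w, fun v _ => by simp [valence, hE], by simp [hE]⟩
end
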